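/- arXiv:1312.1830 — 2 statements merged into one kernel-verified Lean document; each statement's English description precedes it below -/
import Mathlib

section
/- Value of λ under exponential noise. Let E1, E2 be i.i.d. Exp(1) random variables and let ν1, ν2 be i.i.d. Exp(γ) random variables (γ > 0), with (E1, E2, ν1, ν2) mutually independent. Then E[ sign( (E1 + ν1) − (E2 + ν2) ) · (E1 − E2) ] = 1 − 1/(1+γ)². Equivalently, writing σ = 1/γ² for the variance of the noise, this value equals (1 + 2√σ)/(1 + √σ)², and in particular it is strictly positive. -/
/-!
Write `D = E₁ - E₂` and `N = ν₁ - ν₂`. Conditionally on `D = t`, the noise contributes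
`E[sign (t + N)] = sign t · (1 - e^{-γ|t|})`, which for `t ≥ 0` follows from the exponential cdf
and the Laplace transform `E[e^{-γν}] = 1/2`, and for `t < 0` from the symmetry `ν₁ ↔ ν₂`.
Hence the expectation is `E[|D| (1 - e^{-γ|D|})]`. By memorylessness `|D|` is again `Exp(1)`,
so the value is `E[X] - E[X e^{-γX}] = 1 - 1/(1+γ)²` for `X ~ Exp(1)`.
-/

open MeasureTheory ProbabilityTheory Real Set

@[fun_prop]
lemma Real.measurable_sign : Measurable Real.sign := by
  unfold Real.sign
  exact Measurable.ite measurableSet_Iio measurable_const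
    (Measurable.ite measurableSet_Ioi measurable_const measurable_const)

lemma Real.abs_sign_le_one (t : ℝ) : |Real.sign t| ≤ 1 := by
  rcases Real.sign_apply_eq t with h | h | h <;> simp [h]

lemma Real.sign_mul_self (t : ℝ) : Real.sign t * t = |t| := by
  rcases lt_trichotomy t 0 with h | rfl | h
  · rw [Real.sign_of_neg h, abs_of_neg h]; ring
  · simp
  · rw [Real.sign_of_pos h, abs_of_pos h, one_mul]

lemma integrable_sign_comp {α : Type*} [MeasurableSpace α] {μ : Measure α} [IsFiniteMeasure μ]
    {f : α → ℝ} (hf : Measurable f) : Integrable (fun x => Real.sign (f x)) μ :=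
  .of_bound (Real.measurable_sign.comp hf).aestronglyMeasurable 1
    (.of_forall fun x => Real.abs_sign_le_one (f x))

lemma integral_sign_sub_eq_two_mul_cdf_sub_one {ν : Measure ℝ} [IsProbabilityMeasure ν]
    [NullSingletonClass ν] (s : ℝ) : ∫ b, Real.sign (s - b) ∂ν = 2 * cdf ν s - 1 := by
  have h : (fun b => Real.sign (s - b)) =ᵐ[ν]
      fun b => (Iic s).indicator (fun _ => (2 : ℝ)) b - 1 := by
    filter_upwards [ν.ae_ne s] with b hb
    rcases hb.lt_or_gt with hlt | hgt
    · rw [Real.sign_of_pos (sub_pos.2 hlt), indicator_of_mem (show b ∈ Iic s from hlt.le)]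
      norm_num
    · rw [Real.sign_of_neg (sub_neg.2 hgt),
        indicator_of_notMem (show b ∉ Iic s from not_le.2 hgt)]
      norm_num
  rw [integral_congr_ae h, integral_sub ((integrable_const _).indicator measurableSet_Iic)
    (integrable_const _), integral_indicator_const _ measurableSet_Iic, integral_const,
    cdf_eq_real, smul_eq_mul, probReal_univ, smul_eq_mul, mul_one, mul_comm]

lemma exp_neg_mul_mul_exp_neg_mul (a b x : ℝ) :
    exp (-(a * x)) * exp (-(b * x)) = exp (-((a + b) * x)) := by
  rw [← exp_add]; ring_nf

lemma integrableOn_mul_exp_neg_mul_Ioi {c : ℝ} (hc : 0 < c) :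
    IntegrableOn (fun x => x * exp (-(c * x))) (Ioi 0) := by
  refine (integrableOn_rpow_mul_exp_neg_mul_rpow (s := 1) (p := 1) (by norm_num) one_pos
    hc).congr_fun (fun x _ => ?_) measurableSet_Ioi
  simp [neg_mul]

lemma integral_mul_exp_neg_mul_Ioi {c : ℝ} (hc : 0 < c) :
    ∫ x in Ioi 0, x * exp (-(c * x)) = 1 / c ^ 2 := by
  have h := integral_rpow_mul_exp_neg_mul_Ioi two_pos hc
  rw [show (2 : ℝ) - 1 = 1 by norm_num, Gamma_two] at h
  simp_rw [rpow_one] at h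
  rw [h, mul_one, rpow_two, one_div_pow]

section ExpMeasure

variable {r : ℝ}

instance nullSingletonClass_expMeasure (r : ℝ) : NullSingletonClass (expMeasure r) := by
  unfold expMeasure gammaMeasure; infer_instance

lemma expMeasure_eq_withDensity (r : ℝ) :
    expMeasure r = (volume.restrict (Ici 0)).withDensity
      fun x => ENNReal.ofReal (r * exp (-(r * x))) := by
  rw [expMeasure, gammaMeasure, ← withDensity_indicator measurableSet_Ici]
  congr 1
  funext x
  by_cases hx : 0 ≤ x <;> simp [gammaPDF_eq, hx]

lemma integral_expMeasure (hr : 0 < r) (f : ℝ → ℝ) :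
    ∫ x, f x ∂expMeasure r = ∫ x in Ioi 0, r * exp (-(r * x)) * f x := by
  rw [expMeasure_eq_withDensity, integral_withDensity_eq_integral_toReal_smul (by fun_prop)
    (.of_forall fun _ => ENNReal.ofReal_lt_top), integral_Ici_eq_integral_Ioi]
  simp_rw [ENNReal.toReal_ofReal (by positivity : 0 ≤ r * exp (-(r * _))), smul_eq_mul]

lemma integrable_expMeasure_iff (hr : 0 < r) {f : ℝ → ℝ} :
    Integrable f (expMeasure r) ↔ IntegrableOn (fun x => r * exp (-(r * x)) * f x) (Ioi 0) := by
  rw [expMeasure_eq_withDensity, integrable_withDensity_iff_integrable_smul' (by fun_prop)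
    (.of_forall fun _ => ENNReal.ofReal_lt_top)]
  simp_rw [ENNReal.toReal_ofReal (by positivity : 0 ≤ r * exp (-(r * _))), smul_eq_mul]
  exact integrableOn_Ici_iff_integrableOn_Ioi

lemma expMeasure_Iic (hr : 0 < r) (a : ℝ) :
    expMeasure r (Iic a) = ENNReal.ofReal (if 0 ≤ a then 1 - exp (-(r * a)) else 0) := by
  have : IsProbabilityMeasure (expMeasure r) := isProbabilityMeasure_expMeasure hr
  rw [← ofReal_cdf, cdf_expMeasure_eq hr]

lemma expMeasure_Ioi (hr : 0 < r) {a : ℝ} (ha : 0 ≤ a) :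
    expMeasure r (Ioi a) = ENNReal.ofReal (exp (-(r * a))) := by
  have : IsProbabilityMeasure (expMeasure r) := isProbabilityMeasure_expMeasure hr
  rw [← compl_Iic, prob_compl_eq_one_sub measurableSet_Iic, expMeasure_Iic hr, if_pos ha,
    ← ENNReal.ofReal_one,
    ← ENNReal.ofReal_sub 1 (sub_nonneg.2 (exp_le_one_iff.2 (by nlinarith)))]
  congr 1; ring

lemma ae_pos_expMeasure (hr : 0 < r) : ∀ᵐ x ∂expMeasure r, 0 < x := by
  have h : {x : ℝ | ¬ 0 < x} = Iic 0 := by ext; simp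
  rw [ae_iff, h, expMeasure_Iic hr]
  simp

lemma integrable_exp_neg_mul_expMeasure (hr : 0 < r) {s : ℝ} (hs : 0 < r + s) :
    Integrable (fun x => exp (-(s * x))) (expMeasure r) := by
  rw [integrable_expMeasure_iff hr]
  refine IntegrableOn.congr_fun ((exp_neg_integrableOn_Ioi 0 hs).const_mul r) (fun x _ => ?_)
    measurableSet_Ioi
  rw [mul_assoc, exp_neg_mul_mul_exp_neg_mul, neg_mul]

lemma integral_exp_neg_mul_expMeasure (hr : 0 < r) {s : ℝ} (hs : 0 < r + s) :
    ∫ x, exp (-(s * x)) ∂expMeasure r = r / (r + s) := by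
  simp_rw [integral_expMeasure hr, mul_assoc, exp_neg_mul_mul_exp_neg_mul, integral_const_mul,
    ← neg_mul, integral_exp_mul_Ioi (neg_lt_zero.2 hs), mul_zero, exp_zero]
  field_simp

lemma integrable_mul_exp_neg_mul_expMeasure (hr : 0 < r) {s : ℝ} (hs : 0 < r + s) :
    Integrable (fun x => x * exp (-(s * x))) (expMeasure r) := by
  rw [integrable_expMeasure_iff hr]
  refine IntegrableOn.congr_fun ((integrableOn_mul_exp_neg_mul_Ioi hs).const_mul r)
    (fun x _ => ?_) measurableSet_Ioi
  rw [← exp_neg_mul_mul_exp_neg_mul]; ring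

lemma integral_mul_exp_neg_mul_expMeasure (hr : 0 < r) {s : ℝ} (hs : 0 < r + s) :
    ∫ x, x * exp (-(s * x)) ∂expMeasure r = r / (r + s) ^ 2 := by
  have h (x : ℝ) :
      r * exp (-(r * x)) * (x * exp (-(s * x))) = r * (x * exp (-((r + s) * x))) := by
    rw [← exp_neg_mul_mul_exp_neg_mul]; ring
  simp_rw [integral_expMeasure hr, h, integral_const_mul, integral_mul_exp_neg_mul_Ioi hs]
  ring

lemma integrable_id_expMeasure (hr : 0 < r) : Integrable (fun x => x) (expMeasure r) := by
  simpa using integrable_mul_exp_neg_mul_expMeasure hr (s := 0) (by simpa)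

lemma integral_mul_one_sub_exp_neg_mul_expMeasure (hr : 0 < r) {s : ℝ} (hs : 0 < r + s) :
    ∫ x, x * (1 - exp (-(s * x))) ∂expMeasure r = 1 / r - r / (r + s) ^ 2 := by
  have hmean : ∫ x, x ∂expMeasure r = 1 / r := by
    have := integral_mul_exp_neg_mul_expMeasure hr (s := 0) (by simpa)
    simp only [zero_mul, neg_zero, exp_zero, mul_one, add_zero] at this
    rw [this]; field_simp
  simp_rw [mul_sub, mul_one]
  rw [integral_sub (integrable_id_expMeasure hr) (integrable_mul_exp_neg_mul_expMeasure hr hs),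
    hmean, integral_mul_exp_neg_mul_expMeasure hr hs]

lemma expMeasure_prod_setOf_lt_sub (hr : 0 < r) {c : ℝ} (hc : 0 ≤ c) :
    (expMeasure r).prod (expMeasure r) {p | c < p.1 - p.2}
      = ENNReal.ofReal (exp (-(r * c)) / 2) := by
  have : IsProbabilityMeasure (expMeasure r) := isProbabilityMeasure_expMeasure hr
  have hslice (y : ℝ) :
      (fun x => (x, y)) ⁻¹' {p : ℝ × ℝ | c < p.1 - p.2} = Ioi (y + c) := by
    ext x; simp [lt_sub_iff_add_lt, add_comm]
  rw [Measure.prod_apply_symm (measurableSet_lt measurable_const (by fun_prop))]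
  simp_rw [hslice]
  have htail : ∀ᵐ y ∂expMeasure r,
      expMeasure r (Ioi (y + c)) = ENNReal.ofReal (exp (-(r * c)) * exp (-(r * y))) := by
    filter_upwards [ae_pos_expMeasure hr] with y hy
    rw [expMeasure_Ioi hr (by linarith), ← exp_add]; ring_nf
  rw [lintegral_congr_ae htail, ← ofReal_integral_eq_lintegral_ofReal
    ((integrable_exp_neg_mul_expMeasure hr (by linarith)).const_mul _)
    (.of_forall fun _ => by positivity), integral_const_mul,
    integral_exp_neg_mul_expMeasure hr (by linarith)]
  congr 1; field_simp; ring

lemma expMeasure_prod_setOf_lt_abs_sub (hr : 0 < r) {c : ℝ} (hc : 0 ≤ c) :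
    (expMeasure r).prod (expMeasure r) {p | c < |p.1 - p.2|} = expMeasure r (Ioi c) := by
  have : IsProbabilityMeasure (expMeasure r) := isProbabilityMeasure_expMeasure hr
  have hunion : {p : ℝ × ℝ | c < |p.1 - p.2|}
      = {p | c < p.1 - p.2} ∪ Prod.swap ⁻¹' {p | c < p.1 - p.2} := by
    ext p; simp [lt_abs]
  have hdisj : Disjoint {p : ℝ × ℝ | c < p.1 - p.2} (Prod.swap ⁻¹' {p | c < p.1 - p.2}) :=
    Set.disjoint_left.2 fun p (h1 : c < p.1 - p.2) (h2 : c < p.2 - p.1) => by linarith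
  have hset : MeasurableSet {p : ℝ × ℝ | c < p.1 - p.2} :=
    measurableSet_lt measurable_const (by fun_prop)
  rw [hunion, measure_union hdisj (measurable_swap hset),
    ← Measure.map_apply measurable_swap hset, Measure.prod_swap,
    expMeasure_prod_setOf_lt_sub hr hc, expMeasure_Ioi hr hc,
    ← ENNReal.ofReal_add (by positivity) (by positivity), add_halves]

lemma map_abs_sub_expMeasure_prod (hr : 0 < r) :
    ((expMeasure r).prod (expMeasure r)).map (fun p => |p.1 - p.2|) = expMeasure r := by
  have : IsProbabilityMeasure (expMeasure r) := isProbabilityMeasure_expMeasure hr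
  have hmeas : Measurable fun p : ℝ × ℝ => |p.1 - p.2| := by fun_prop
  have : IsProbabilityMeasure (((expMeasure r).prod (expMeasure r)).map (fun p => |p.1 - p.2|)) :=
    Measure.isProbabilityMeasure_map hmeas.aemeasurable
  refine Measure.ext_of_Iic _ _ fun a => ?_
  rcases lt_or_ge a 0 with ha | ha
  · have hempty : (fun p : ℝ × ℝ => |p.1 - p.2|) ⁻¹' Iic a = ∅ :=
      eq_empty_of_forall_notMem fun p (hp : |p.1 - p.2| ≤ a) => by
        linarith [abs_nonneg (p.1 - p.2)]
    rw [Measure.map_apply hmeas measurableSet_Iic, hempty, measure_empty, expMeasure_Iic hr,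
      if_neg ha.not_ge, ENNReal.ofReal_zero]
  · rw [← compl_Ioi, prob_compl_eq_one_sub measurableSet_Ioi,
      prob_compl_eq_one_sub measurableSet_Ioi, Measure.map_apply hmeas measurableSet_Ioi]
    exact congrArg (1 - ·) (expMeasure_prod_setOf_lt_abs_sub hr ha)

lemma integral_sign_add_sub_expMeasure_prod_of_nonneg (hr : 0 < r) {t : ℝ} (ht : 0 ≤ t) :
    ∫ n, Real.sign (t + n.1 - n.2) ∂(expMeasure r).prod (expMeasure r)
      = 1 - exp (-(r * t)) := by
  have : IsProbabilityMeasure (expMeasure r) := isProbabilityMeasure_expMeasure hr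
  have hinner : ∀ᵐ a ∂expMeasure r, ∫ b, Real.sign (t + a - b) ∂expMeasure r
      = 1 - 2 * exp (-(r * t)) * exp (-(r * a)) := by
    filter_upwards [ae_pos_expMeasure hr] with a ha
    rw [integral_sign_sub_eq_two_mul_cdf_sub_one, cdf_expMeasure_eq hr, if_pos (by linarith),
      mul_add, neg_add, exp_add]
    ring
  rw [integral_prod _ (integrable_sign_comp (by fun_prop)), integral_congr_ae hinner,
    integral_sub (integrable_const _)
      ((integrable_exp_neg_mul_expMeasure hr (by linarith)).const_mul _),
    integral_const_mul, integral_exp_neg_mul_expMeasure hr (by linarith), integral_const,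
    probReal_univ, smul_eq_mul, mul_one]
  field_simp
  ring

lemma integral_sign_add_sub_expMeasure_prod (hr : 0 < r) (t : ℝ) :
    ∫ n, Real.sign (t + n.1 - n.2) ∂(expMeasure r).prod (expMeasure r)
      = Real.sign t * (1 - exp (-(r * |t|))) := by
  have : IsProbabilityMeasure (expMeasure r) := isProbabilityMeasure_expMeasure hr
  rcases lt_trichotomy t 0 with ht | rfl | ht
  · have hodd : ∫ n, Real.sign (t + n.1 - n.2) ∂(expMeasure r).prod (expMeasure r)
        = -∫ n, Real.sign (-t + n.1 - n.2) ∂(expMeasure r).prod (expMeasure r) := by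
      rw [← integral_neg, ← integral_prod_swap]
      refine integral_congr_ae (.of_forall fun n => ?_)
      simp only [Prod.fst_swap, Prod.snd_swap, ← Real.sign_neg]
      ring_nf
    rw [hodd, integral_sign_add_sub_expMeasure_prod_of_nonneg hr (by linarith),
      Real.sign_of_neg ht, abs_of_neg ht]
    ring
  · rw [integral_sign_add_sub_expMeasure_prod_of_nonneg hr le_rfl]
    simp
  · rw [integral_sign_add_sub_expMeasure_prod_of_nonneg hr ht.le, Real.sign_of_pos ht,
      abs_of_pos ht, one_mul]

lemma integral_sign_mul_sub_expMeasure_prod (hr : 0 < r) {γ : ℝ} (hγ : 0 < γ) :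
    ∫ p, Real.sign ((p.1.1 + p.2.1) - (p.1.2 + p.2.2)) * (p.1.1 - p.1.2)
        ∂((expMeasure r).prod (expMeasure r)).prod ((expMeasure γ).prod (expMeasure γ))
      = 1 / r - r / (r + γ) ^ 2 := by
  have : IsProbabilityMeasure (expMeasure r) := isProbabilityMeasure_expMeasure hr
  have : IsProbabilityMeasure (expMeasure γ) := isProbabilityMeasure_expMeasure hγ
  have hdiff : Integrable (fun q : ℝ × ℝ => q.1 - q.2) ((expMeasure r).prod (expMeasure r)) :=
    ((integrable_id_expMeasure hr).comp_fst _).sub ((integrable_id_expMeasure hr).comp_snd _)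
  have hint : Integrable (fun p : (ℝ × ℝ) × ℝ × ℝ =>
      Real.sign ((p.1.1 + p.2.1) - (p.1.2 + p.2.2)) * (p.1.1 - p.1.2))
      (((expMeasure r).prod (expMeasure r)).prod ((expMeasure γ).prod (expMeasure γ))) := by
    refine (hdiff.abs.comp_fst _).mono' (by fun_prop) (.of_forall fun p => ?_)
    rw [Real.norm_eq_abs, abs_mul]
    exact mul_le_of_le_one_left (abs_nonneg _) (Real.abs_sign_le_one _)
  have hinner (q : ℝ × ℝ) :
      ∫ n, Real.sign ((q.1 + n.1) - (q.2 + n.2)) * (q.1 - q.2)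
          ∂(expMeasure γ).prod (expMeasure γ)
        = |q.1 - q.2| * (1 - exp (-(γ * |q.1 - q.2|))) := by
    have harg (n : ℝ × ℝ) : (q.1 + n.1) - (q.2 + n.2) = (q.1 - q.2) + n.1 - n.2 := by ring
    simp_rw [harg]
    rw [integral_mul_const, integral_sign_add_sub_expMeasure_prod hγ, mul_right_comm,
      Real.sign_mul_self]
  rw [integral_prod _ hint]
  simp_rw [hinner]
  rw [← integral_map (f := fun x => x * (1 - exp (-(γ * x)))) (by fun_prop) (by fun_prop),
    map_abs_sub_expMeasure_prod hr,
    integral_mul_one_sub_exp_neg_mul_expMeasure hr (by linarith)]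

end ExpMeasure

lemma ProbabilityTheory.iIndepFun.map_prodMk_prodMk_eq {Ω ι β : Type*} [MeasurableSpace Ω]
    [MeasurableSpace β] {μ : Measure Ω} [IsFiniteMeasure μ] {f : ι → Ω → β}
    (h : iIndepFun f μ) (hf : ∀ i, AEMeasurable (f i) μ) {i j k l : ι} (hij : i ≠ j)
    (hik : i ≠ k) (hil : i ≠ l) (hjk : j ≠ k) (hjl : j ≠ l) (hkl : k ≠ l) :
    μ.map (fun ω => ((f i ω, f j ω), (f k ω, f l ω)))
      = ((μ.map (f i)).prod (μ.map (f j))).prod ((μ.map (f k)).prod (μ.map (f l))) := by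
  rw [(indepFun_iff_map_prod_eq_prod_map_map ((hf i).prodMk (hf j)) ((hf k).prodMk (hf l))).1
      (h.indepFun_prodMk_prodMk₀ hf i j k l hik hil hjk hjl),
    (indepFun_iff_map_prod_eq_prod_map_map (hf i) (hf j)).1 (h.indepFun hij),
    (indepFun_iff_map_prod_eq_prod_map_map (hf k) (hf l)).1 (h.indepFun hkl)]

lemma aemeasurable_of_map_eq_expMeasure {Ω : Type*} [MeasurableSpace Ω] {μ : Measure Ω}
    {X : Ω → ℝ} {r : ℝ} (hr : 0 < r) (h : μ.map X = expMeasure r) : AEMeasurable X μ :=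
  .of_map_ne_zero (h ▸ (isProbabilityMeasure_expMeasure hr).ne_zero)

/-- Value of λ under exponential noise. -/
theorem lambda_exponential_noise
    (Ω : Type) [MeasurableSpace Ω] (μ : Measure Ω) [IsProbabilityMeasure μ]
    (γ : ℝ) (hγ : 0 < γ)
    (E1 E2 ν1 ν2 : Ω → ℝ)
    (hindep : iIndepFun ![E1, E2, ν1, ν2] μ)
    (hE1 : Measure.map E1 μ = expMeasure 1)
    (hE2 : Measure.map E2 μ = expMeasure 1)
    (hν1 : Measure.map ν1 μ = expMeasure γ)
    (hν2 : Measure.map ν2 μ = expMeasure γ) :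
    (∫ ω, Real.sign ((E1 ω + ν1 ω) - (E2 ω + ν2 ω)) * (E1 ω - E2 ω) ∂μ)
        = 1 - 1 / (1 + γ) ^ 2 ∧
    (∀ σ : ℝ, σ = 1 / γ ^ 2 →
      (∫ ω, Real.sign ((E1 ω + ν1 ω) - (E2 ω + ν2 ω)) * (E1 ω - E2 ω) ∂μ)
        = (1 + 2 * Real.sqrt σ) / (1 + Real.sqrt σ) ^ 2) ∧
    0 < ∫ ω, Real.sign ((E1 ω + ν1 ω) - (E2 ω + ν2 ω)) * (E1 ω - E2 ω) ∂μ := by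
  have hE1m := aemeasurable_of_map_eq_expMeasure one_pos hE1
  have hE2m := aemeasurable_of_map_eq_expMeasure one_pos hE2
  have hν1m := aemeasurable_of_map_eq_expMeasure hγ hν1
  have hν2m := aemeasurable_of_map_eq_expMeasure hγ hν2
  have hlaw : μ.map (fun ω => ((E1 ω, E2 ω), (ν1 ω, ν2 ω)))
      = ((expMeasure 1).prod (expMeasure 1)).prod ((expMeasure γ).prod (expMeasure γ)) := by
    simpa [hE1, hE2, hν1, hν2] using hindep.map_prodMk_prodMk_eq
      (Fin.forall_fin_succ.2 ⟨hE1m, Fin.forall_fin_succ.2 ⟨hE2m, Fin.forall_fin_succ.2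
        ⟨hν1m, Fin.forall_fin_succ.2 ⟨hν2m, finZeroElim⟩⟩⟩⟩)
      (i := 0) (j := 1) (k := 2) (l := 3) (by decide) (by decide) (by decide) (by decide)
      (by decide) (by decide)
  have hval : ∫ ω, Real.sign ((E1 ω + ν1 ω) - (E2 ω + ν2 ω)) * (E1 ω - E2 ω) ∂μ
      = 1 - 1 / (1 + γ) ^ 2 := by
    rw [← integral_map ((hE1m.prodMk hE2m).prodMk (hν1m.prodMk hν2m))
        (f := fun p : (ℝ × ℝ) × ℝ × ℝ =>
          Real.sign ((p.1.1 + p.2.1) - (p.1.2 + p.2.2)) * (p.1.1 - p.1.2)) (by fun_prop),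
      hlaw, integral_sign_mul_sub_expMeasure_prod one_pos hγ]
    ring
  refine ⟨hval, fun σ hσ => ?_, ?_⟩
  · rw [hval, hσ, show 1 / γ ^ 2 = (1 / γ) ^ 2 by ring, sqrt_sq (by positivity)]
    field_simp
    ring
  · rw [hval, sub_pos, div_lt_one (by positivity)]
    nlinarith
end

section
/- Correctness of the sub-exponential (SubExpPhase) initialization in expectation. Let x0, x ∈ ℂ^n with ‖x0‖ = ‖x‖ = 1 and let a be a standard complex Gaussian vector in ℂ^n. Then E[ |⟨a, x0⟩|² · |⟨a, x⟩|² ] = |⟨x0, x⟩|² + 1. Equivalently, the matrix C = E[ |⟨a, x0⟩|² · a a^* ] satisfies x^* C x = |⟨x0, x⟩|² + 1 for every unit vector x, i.e., C = x0 x0^* + I_n. -/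
open MeasureTheory ProbabilityTheory Matrix
open scoped InnerProductSpace ComplexConjugate BigOperators

noncomputable section

instance {n : ℕ} : MeasurableSpace (EuclideanSpace ℂ (Fin n)) := MeasurableSpace.pi.comap WithLp.ofLp
instance {n : ℕ} : BorelSpace (EuclideanSpace ℂ (Fin n)) := PiLp.borelSpace 2

/-- Law of a standard complex Gaussian in `ℂ`: real and imaginary parts are iid `N(0, 1/2)`. -/
def complexGaussian : Measure ℂ :=
  ((gaussianReal 0 (1/2)).prod (gaussianReal 0 (1/2))).map Complex.equivRealProd.symm

/-- Law of a standard complex Gaussian vector in `ℂ^n` (the pushforward to `ℂ^n` of the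
centered Gaussian product measure with coordinate variance `1/2`). -/
def stdCGaussian (n : ℕ) : Measure (EuclideanSpace ℂ (Fin n)) :=
  (Measure.pi fun _ : Fin n => complexGaussian).map (WithLp.toLp 2)

/-- The rank-one matrix `a a^*`, with entries `a_j conj (a_k)`. -/
def outerC {n : ℕ} (a : EuclideanSpace ℂ (Fin n)) : Matrix (Fin n) (Fin n) ℂ :=
  fun j k => a j * (starRingEnd ℂ) (a k)

/-- The real quadratic form `x ↦ x^* A x` of a (Hermitian) matrix `A`. -/
def qf {n : ℕ} (A : Matrix (Fin n) (Fin n) ℂ) (x : EuclideanSpace ℂ (Fin n)) : ℝ :=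
  (star (fun j => x j) ⬝ᵥ A.mulVec (fun j => x j)).re

/-!
Expanding `|⟪a, y⟫|²` turns every entry of `E[|⟪a, y⟫|² a a^*]` into a combination of the fourth
moments `E[a_p conj(a_q) a_r conj(a_s)]`. The coordinates are independent, and each is a complex
Gaussian whose law is invariant under the phase rotations `z ↦ e^{iθ} z` (rotation invariance
of a centred Gaussian product measure), so `E[z^a conj(z)^b] = 0` for `a ≠ b`, while
`E|z|² = 1` and `E|z|⁴ = 2` come from the Gaussian moments `Γ(m + 1/2) / √π`. This gives the
Wick formula `E[a_p conj(a_q) a_r conj(a_s)] = δ_pq δ_rs + δ_ps δ_rq`, hence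
`E[|⟪a, y⟫|² a a^*] = y y^* + ‖y‖² I`. The scalar identity is the quadratic form of this matrix,
because `|⟪a, x⟫|² = x^* (a a^*) x`.
-/

open scoped Real

lemma integral_pow_two_mul_gaussianReal_half (m : ℕ) :
    ∫ x, x ^ (2 * m) ∂gaussianReal 0 (1 / 2) = Real.Gamma (m + 1 / 2) / √π := by
  have hdensity : ∀ x, gaussianPDFReal 0 (1 / 2) x • x ^ (2 * m)
      = (√π)⁻¹ * (x ^ (2 * m) * Real.exp (-x ^ 2)) := by
    intro x
    rw [gaussianPDFReal, smul_eq_mul, sub_zero]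
    norm_num
    field_simp
  have hhalf : ∫ x in Set.Ioi (0 : ℝ), x ^ (2 * m) * Real.exp (-x ^ 2)
      = Real.Gamma (m + 1 / 2) / 2 := by
    have h := integral_rpow_mul_exp_neg_mul_rpow (p := 2) (q := 2 * m) (b := 1) two_pos
      (by linarith [(Nat.cast_nonneg m : (0 : ℝ) ≤ m)]) one_pos
    rw [Real.one_rpow, one_mul] at h
    convert h using 1
    · refine setIntegral_congr_fun measurableSet_Ioi fun x _ => ?_
      rw [Real.rpow_two, ← Real.rpow_natCast]
      push_cast
      rw [neg_one_mul]
    · ring_nf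
  have heven : ∫ x : ℝ, x ^ (2 * m) * Real.exp (-x ^ 2)
      = 2 * ∫ x in Set.Ioi (0 : ℝ), x ^ (2 * m) * Real.exp (-x ^ 2) := by
    rw [← integral_comp_abs (f := fun x : ℝ => x ^ (2 * m) * Real.exp (-x ^ 2))]
    congr 1 with x
    rw [pow_abs_two_mul, sq_abs]
  rw [integral_gaussianReal_eq_integral_smul (by norm_num),
    integral_congr_ae (ae_of_all _ hdensity), integral_const_mul, heven, hhalf]
  ring

lemma integral_sq_gaussianReal_half : ∫ x, x ^ 2 ∂gaussianReal 0 (1 / 2) = 1 / 2 := by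
  have h := integral_pow_two_mul_gaussianReal_half 1
  rw [show ((1 : ℕ) : ℝ) + 1 / 2 = 1 / 2 + 1 by norm_num, Real.Gamma_add_one (by norm_num),
    Real.Gamma_one_half_eq] at h
  rw [h]
  field_simp

lemma integral_pow_four_gaussianReal_half : ∫ x, x ^ 4 ∂gaussianReal 0 (1 / 2) = 3 / 4 := by
  have h := integral_pow_two_mul_gaussianReal_half 2
  rw [show ((2 : ℕ) : ℝ) + 1 / 2 = 1 / 2 + 1 + 1 by norm_num, Real.Gamma_add_one (by norm_num),
    Real.Gamma_add_one (by norm_num), Real.Gamma_one_half_eq] at h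
  rw [h]
  field_simp
  ring

lemma integrable_pow_gaussianReal (μ : ℝ) (v : NNReal) (k : ℕ) :
    Integrable (fun x => x ^ k) (gaussianReal μ v) :=
  integrable_pow_of_mem_interior_integrableExpSet (X := id) (by simp) k

lemma complexGaussian_eq_map_equivRealProdCLM :
    complexGaussian = ((gaussianReal 0 (1 / 2)).prod (gaussianReal 0 (1 / 2))).map
      Complex.equivRealProdCLM.symm := rfl

instance isGaussian_complexGaussian : IsGaussian complexGaussian :=
  isGaussian_map_equiv Complex.equivRealProdCLM.symm

lemma integral_complexGaussian {E : Type*} [NormedAddCommGroup E] [NormedSpace ℝ E] (g : ℂ → E) :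
    ∫ z, g z ∂complexGaussian
      = ∫ p, g ⟨p.1, p.2⟩ ∂(gaussianReal 0 (1 / 2)).prod (gaussianReal 0 (1 / 2)) :=
  integral_map_equiv Complex.measurableEquivRealProd.symm g

lemma integral_normSq_complexGaussian : ∫ z, Complex.normSq z ∂complexGaussian = 1 := by
  have hsq := integrable_pow_gaussianReal 0 (1 / 2) 2
  simp_rw [integral_complexGaussian, Complex.normSq_mk, ← sq]
  rw [integral_add (hsq.comp_fst _) (hsq.comp_snd _), integral_fun_fst (fun x => x ^ 2),
    integral_fun_snd (fun x => x ^ 2), integral_sq_gaussianReal_half]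
  norm_num

lemma integral_normSq_sq_complexGaussian : ∫ z, Complex.normSq z ^ 2 ∂complexGaussian = 2 := by
  have hsq := integrable_pow_gaussianReal 0 (1 / 2) 2
  have hfour := integrable_pow_gaussianReal 0 (1 / 2) 4
  have hquartic : Integrable (fun p : ℝ × ℝ => p.1 ^ 4 + p.2 ^ 4)
      ((gaussianReal 0 (1 / 2)).prod (gaussianReal 0 (1 / 2))) :=
    (hfour.comp_fst _).add (hfour.comp_snd _)
  have hexpand : ∀ x y : ℝ, (x * x + y * y) ^ 2 = x ^ 4 + y ^ 4 + 2 * (x ^ 2 * y ^ 2) := by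
    intros; ring
  simp_rw [integral_complexGaussian, Complex.normSq_mk, hexpand]
  rw [integral_add hquartic ((hsq.mul_prod hsq).const_mul 2),
    integral_add (hfour.comp_fst _) (hfour.comp_snd _), integral_fun_fst (fun x => x ^ 4),
    integral_fun_snd (fun x => x ^ 4), integral_const_mul,
    integral_prod_mul (fun x => x ^ 2) (fun x => x ^ 2),
    integral_sq_gaussianReal_half, integral_pow_four_gaussianReal_half]
  norm_num

lemma complexGaussian_map_exp_mul (θ : ℝ) :
    complexGaussian.map (fun z => Complex.exp (θ * Complex.I) * z) = complexGaussian := by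
  have hrot : (fun z => Complex.exp (θ * Complex.I) * z) ∘ Complex.equivRealProdCLM.symm
      = Complex.equivRealProdCLM.symm ∘ ContinuousLinearMap.rotation (-θ) := by
    funext p
    simp only [Function.comp_apply, Complex.equivRealProdCLM_symm_apply,
      ContinuousLinearMap.rotation_apply, Real.cos_neg, Real.sin_neg, smul_eq_mul,
      Complex.exp_mul_I]
    push_cast
    linear_combination Complex.sin θ * p.2 * Complex.I_sq
  rw [complexGaussian_eq_map_equivRealProdCLM, Measure.map_map (by fun_prop) (by fun_prop), hrot,
    ← Measure.map_map (by fun_prop) (by fun_prop), IsGaussian.map_rotation_eq_self (by simp)]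

lemma integrable_pow_mul_conj_pow_complexGaussian (a b : ℕ) :
    Integrable (fun z : ℂ => z ^ a * conj z ^ b) complexGaussian := by
  refine (IsGaussian.memLp_id complexGaussian ((a + b : ℕ) : ENNReal) (by simp)
    ).integrable_norm_pow'.mono' (by fun_prop) (ae_of_all _ fun z => ?_)
  simp [pow_add]

lemma integral_pow_mul_conj_pow_complexGaussian_of_ne {a b : ℕ} (hab : a ≠ b) :
    ∫ z, z ^ a * conj z ^ b ∂complexGaussian = 0 := by
  set θ := π / ((a : ℝ) - b)
  have hunit : Complex.exp (θ * Complex.I) ^ a * conj (Complex.exp (θ * Complex.I)) ^ b = -1 := by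
    have hab' : (a : ℂ) - b ≠ 0 := sub_ne_zero.mpr (by exact_mod_cast hab)
    rw [← Complex.exp_conj, ← Complex.exp_nat_mul, ← Complex.exp_nat_mul, ← Complex.exp_add,
      ← Complex.exp_pi_mul_I]
    congr 1
    simp only [map_mul, Complex.conj_ofReal, Complex.conj_I, θ]
    push_cast
    field_simp
    ring
  have hphase : ∀ z : ℂ, (Complex.exp (θ * Complex.I) * z) ^ a
      * conj (Complex.exp (θ * Complex.I) * z) ^ b = -(z ^ a * conj z ^ b) := by
    intro z
    rw [map_mul, mul_pow, mul_pow, mul_mul_mul_comm, hunit, neg_one_mul]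
  have h := integral_map (μ := complexGaussian) (φ := fun z => Complex.exp (θ * Complex.I) * z)
    (f := fun z : ℂ => z ^ a * conj z ^ b) (by fun_prop) (by fun_prop)
  rw [complexGaussian_map_exp_mul] at h
  simp_rw [hphase, integral_neg] at h
  linear_combination h / 2

open scoped Nat in
lemma integral_pow_mul_conj_pow_complexGaussian {a b : ℕ} (ha : a ≤ 2) (hb : b ≤ 2) :
    ∫ z, z ^ a * conj z ^ b ∂complexGaussian = if a = b then (a ! : ℂ) else 0 := by
  split_ifs with hab
  · subst hab
    have hnormSq : ∀ z : ℂ, z ^ a * conj z ^ a = ((Complex.normSq z ^ a : ℝ) : ℂ) := by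
      intro z
      rw [← mul_pow, Complex.mul_conj, Complex.ofReal_pow]
    simp_rw [hnormSq, integral_complex_ofReal]
    interval_cases a
    · simp
    · simp [integral_normSq_complexGaussian]
    · simp [integral_normSq_sq_complexGaussian]
  · exact integral_pow_mul_conj_pow_complexGaussian_of_ne hab

section Exponents

variable {ι : Type*} [Fintype ι] [DecidableEq ι]

lemma prod_pow_single_one {M : Type*} [CommMonoid M] (x : ι → M) (p : ι) :
    ∏ i, x i ^ (Pi.single p 1 : ι → ℕ) i = x p := by
  simp [Pi.single_apply, pow_ite]

open scoped Nat in
lemma prod_factorial_single_add_single (p r : ι) :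
    ∏ i, ((Pi.single p 1 + Pi.single r 1 : ι → ℕ) i)! = if p = r then 2 else 1 := by
  split_ifs with h
  · subst h
    rw [← Pi.single_add, Finset.prod_eq_single p (fun i _ hi => by simp [hi]) (by simp)]
    simp
  · refine Finset.prod_eq_one fun i _ => ?_
    by_cases hp : i = p <;> by_cases hr : i = r <;> simp_all

end Exponents

section StdCGaussian

variable {n : ℕ}

lemma integral_prod_stdCGaussian (f : Fin n → ℂ → ℂ) :
    ∫ a, ∏ i, f i (a i) ∂stdCGaussian n = ∏ i, ∫ z, f i z ∂complexGaussian := by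
  rw [stdCGaussian, ← MeasurableEquiv.coe_toLp, integral_map_equiv]
  exact integral_fintype_prod_eq_prod f

lemma integrable_prod_stdCGaussian {f : Fin n → ℂ → ℂ}
    (hf : ∀ i, Integrable (f i) complexGaussian) :
    Integrable (fun a : EuclideanSpace ℂ (Fin n) => ∏ i, f i (a i)) (stdCGaussian n) := by
  rw [stdCGaussian, ← MeasurableEquiv.coe_toLp, integrable_map_equiv]
  exact Integrable.fintype_prod hf

open scoped Nat in
lemma integral_prod_pow_mul_conj_pow_stdCGaussian {α β : Fin n → ℕ} (hα : ∀ i, α i ≤ 2)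
    (hβ : ∀ i, β i ≤ 2) :
    ∫ a, ∏ i, a i ^ α i * conj (a i) ^ β i ∂stdCGaussian n
      = if α = β then ∏ i, ((α i)! : ℂ) else 0 := by
  rw [integral_prod_stdCGaussian (fun i z => z ^ α i * conj z ^ β i)]
  simp_rw [integral_pow_mul_conj_pow_complexGaussian (hα _) (hβ _)]
  split_ifs with h
  · simp [h]
  · obtain ⟨i, hi⟩ := Function.ne_iff.mp h
    exact Finset.prod_eq_zero (Finset.mem_univ i) (if_neg hi)

lemma prod_pow_mul_conj_pow_single_add_single (a : Fin n → ℂ) (p q r s : Fin n) :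
    ∏ i, a i ^ (Pi.single p 1 + Pi.single r 1 : Fin n → ℕ) i
      * conj (a i) ^ (Pi.single q 1 + Pi.single s 1 : Fin n → ℕ) i
      = a p * conj (a q) * (a r * conj (a s)) := by
  simp only [Pi.add_apply, pow_add, Finset.prod_mul_distrib, prod_pow_single_one a,
    prod_pow_single_one (fun i => conj (a i))]
  ring

lemma integral_mul_conj_mul_mul_conj_stdCGaussian (p q r s : Fin n) :
    ∫ a, a p * conj (a q) * (a r * conj (a s)) ∂stdCGaussian n
      = (if p = q ∧ r = s then 1 else 0) + (if p = s ∧ r = q then 1 else 0) := by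
  have hle : ∀ p r i, (Pi.single p 1 + Pi.single r 1 : Fin n → ℕ) i ≤ 2 := by
    intro p r i
    simp only [Pi.add_apply, Pi.single_apply]
    split_ifs <;> norm_num
  simp_rw [← prod_pow_mul_conj_pow_single_add_single _ p q r s]
  rw [integral_prod_pow_mul_conj_pow_stdCGaussian (hle p r) (hle q s), ← Nat.cast_prod,
    prod_factorial_single_add_single]
  simp only [Pi.single_add_single_eq_single_add_single one_ne_zero one_ne_zero]
  split_ifs <;> grind

lemma integrable_mul_conj_mul_mul_conj_stdCGaussian (p q r s : Fin n) :
    Integrable (fun a : EuclideanSpace ℂ (Fin n) => a p * conj (a q) * (a r * conj (a s)))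
      (stdCGaussian n) := by
  simp_rw [← prod_pow_mul_conj_pow_single_add_single _ p q r s]
  exact integrable_prod_stdCGaussian fun i => integrable_pow_mul_conj_pow_complexGaussian _ _

end StdCGaussian

section IntegralQuadraticForm

variable {m Ω : Type*} [Fintype m] [MeasurableSpace Ω] {μ : Measure Ω}
  {M : Ω → Matrix m m ℂ}

lemma star_dotProduct_mulVec_eq_sum (A : Matrix m m ℂ) (v : m → ℂ) :
    star v ⬝ᵥ A *ᵥ v = ∑ j, ∑ k, star (v j) * v k * A j k := by
  simp only [dotProduct, mulVec, Finset.mul_sum, Pi.star_apply]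
  exact Finset.sum_congr rfl fun j _ => Finset.sum_congr rfl fun k _ => by ring

lemma integrable_star_dotProduct_mulVec (hM : ∀ j k, Integrable (fun ω => M ω j k) μ)
    (v : m → ℂ) : Integrable (fun ω => star v ⬝ᵥ M ω *ᵥ v) μ := by
  simp_rw [star_dotProduct_mulVec_eq_sum]
  exact integrable_finsetSum _ fun j _ => integrable_finsetSum _ fun k _ =>
    (hM j k).const_mul _

lemma integral_star_dotProduct_mulVec (hM : ∀ j k, Integrable (fun ω => M ω j k) μ)
    (v : m → ℂ) :
    ∫ ω, star v ⬝ᵥ M ω *ᵥ v ∂μ = star v ⬝ᵥ (fun j k => ∫ ω, M ω j k ∂μ) *ᵥ v := by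
  have hterm : ∀ j k, Integrable (fun ω => star (v j) * v k * M ω j k) μ :=
    fun j k => (hM j k).const_mul _
  rw [star_dotProduct_mulVec_eq_sum (fun j k => ∫ ω, M ω j k ∂μ)]
  simp_rw [star_dotProduct_mulVec_eq_sum _ v]
  rw [integral_finsetSum _ fun j _ => integrable_finsetSum _ fun k _ => hterm j k]
  refine Finset.sum_congr rfl fun j _ => ?_
  rw [integral_finsetSum _ fun k _ => hterm j k]
  simp_rw [integral_const_mul]

end IntegralQuadraticForm

section QuadraticForm

variable {n : ℕ}

lemma star_dotProduct_outerC_mulVec (a x : EuclideanSpace ℂ (Fin n)) :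
    star (fun j => x j) ⬝ᵥ outerC a *ᵥ (fun j => x j) = ((‖⟪a, x⟫_ℂ‖ ^ 2 : ℝ) : ℂ) := by
  rw [Complex.ofReal_pow, ← Complex.mul_conj', EuclideanSpace.inner_eq_star_dotProduct]
  simp only [dotProduct, mulVec, outerC, map_sum, Finset.mul_sum, Finset.sum_mul, map_mul]
  refine Finset.sum_congr rfl fun i _ => Finset.sum_congr rfl fun l _ => ?_
  simp only [Pi.star_apply, RCLike.star_def, Complex.conj_conj]
  ring

lemma qf_outerC (a x : EuclideanSpace ℂ (Fin n)) : qf (outerC a) x = ‖⟪a, x⟫_ℂ‖ ^ 2 := by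
  rw [qf, star_dotProduct_outerC_mulVec, Complex.ofReal_re]

lemma qf_add (A B : Matrix (Fin n) (Fin n) ℂ) (x : EuclideanSpace ℂ (Fin n)) :
    qf (A + B) x = qf A x + qf B x := by
  simp only [qf, add_mulVec, dotProduct_add, Complex.add_re]

lemma qf_one (x : EuclideanSpace ℂ (Fin n)) : qf 1 x = ‖x‖ ^ 2 := by
  rw [qf, one_mulVec, ← dotProduct_comm, ← EuclideanSpace.inner_eq_star_dotProduct,
    inner_self_eq_norm_sq_to_K]
  norm_cast

lemma qf_ofReal_smul (r : ℝ) (A : Matrix (Fin n) (Fin n) ℂ) (x : EuclideanSpace ℂ (Fin n)) :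
    qf ((r : ℂ) • A) x = r * qf A x := by
  simp only [qf, smul_mulVec, dotProduct_smul, smul_eq_mul, Complex.re_ofReal_mul]

lemma integral_qf {Ω : Type*} [MeasurableSpace Ω] {μ : Measure Ω}
    {M : Ω → Matrix (Fin n) (Fin n) ℂ} (hM : ∀ j k, Integrable (fun ω => M ω j k) μ)
    (x : EuclideanSpace ℂ (Fin n)) :
    ∫ ω, qf (M ω) x ∂μ = qf (fun j k => ∫ ω, M ω j k ∂μ) x := by
  simp only [qf]
  rw [← integral_star_dotProduct_mulVec hM]
  exact integral_re (integrable_star_dotProduct_mulVec hM _)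

lemma ofReal_sq_norm_inner_mul_eq_star_dotProduct (a y : EuclideanSpace ℂ (Fin n))
    (c : ℂ) :
    ((‖⟪a, y⟫_ℂ‖ ^ 2 : ℝ) : ℂ) * c = star (fun p => y p) ⬝ᵥ (c • outerC a) *ᵥ (fun p => y p) := by
  rw [smul_mulVec, dotProduct_smul, star_dotProduct_outerC_mulVec, smul_eq_mul, mul_comm]

end QuadraticForm

lemma integrable_sq_norm_inner_mul_outerC_stdCGaussian {n : ℕ} (y : EuclideanSpace ℂ (Fin n))
    (j k : Fin n) :
    Integrable (fun a => ((‖⟪a, y⟫_ℂ‖ ^ 2 : ℝ) : ℂ) * outerC a j k) (stdCGaussian n) := by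
  simp_rw [ofReal_sq_norm_inner_mul_eq_star_dotProduct]
  exact integrable_star_dotProduct_mulVec (M := fun a => outerC a j k • outerC a)
    (fun p q => integrable_mul_conj_mul_mul_conj_stdCGaussian j k p q) _

lemma integral_sq_norm_inner_mul_outerC_stdCGaussian {n : ℕ} (y : EuclideanSpace ℂ (Fin n))
    (j k : Fin n) :
    ∫ a, ((‖⟪a, y⟫_ℂ‖ ^ 2 : ℝ) : ℂ) * outerC a j k ∂stdCGaussian n
      = (outerC y + ((‖y‖ ^ 2 : ℝ) : ℂ) • 1) j k := by
  simp_rw [ofReal_sq_norm_inner_mul_eq_star_dotProduct]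
  rw [integral_star_dotProduct_mulVec (M := fun a => outerC a j k • outerC a)
    fun p q => integrable_mul_conj_mul_mul_conj_stdCGaussian j k p q]
  simp only [Matrix.smul_apply, smul_eq_mul, outerC, integral_mul_conj_mul_mul_conj_stdCGaussian,
    dotProduct, mulVec, Pi.star_apply, RCLike.star_def, ite_and, add_mul, mul_add, ite_mul, mul_ite,
    one_mul, zero_mul, mul_one, mul_zero, Finset.sum_add_distrib, Finset.sum_ite_irrel,
    Finset.sum_ite_eq, Finset.sum_ite_eq', Finset.mem_univ, if_true, Finset.sum_const_zero,
    Complex.conj_mul', EuclideanSpace.norm_sq_eq, Complex.ofReal_sum, Complex.ofReal_pow,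
    Matrix.add_apply, Matrix.one_apply]
  ring

/-- Correctness of the sub-exponential (SubExpPhase) initialization
in expectation. -/
theorem subexp_initialization_correctness
    (n : ℕ) (x0 x : EuclideanSpace ℂ (Fin n)) (hx0 : ‖x0‖ = 1) (hx : ‖x‖ = 1)
    (C : Matrix (Fin n) (Fin n) ℂ)
    (hC : ∀ j k, C j k =
      ∫ a, ((‖⟪a, x0⟫_ℂ‖ ^ 2 : ℝ) : ℂ) * (a j * (starRingEnd ℂ) (a k)) ∂(stdCGaussian n)) :
    (∫ a, ‖⟪a, x0⟫_ℂ‖ ^ 2 * ‖⟪a, x⟫_ℂ‖ ^ 2 ∂(stdCGaussian n)) = ‖⟪x0, x⟫_ℂ‖ ^ 2 + 1 ∧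
    qf C x = ‖⟪x0, x⟫_ℂ‖ ^ 2 + 1 ∧
    C = outerC x0 + 1 := by
  have hC_eq : C = outerC x0 + 1 := by
    ext j k
    rw [(hC j k).trans (integral_sq_norm_inner_mul_outerC_stdCGaussian x0 j k), hx0]
    simp
  have hqf : qf C x = ‖⟪x0, x⟫_ℂ‖ ^ 2 + 1 := by
    rw [hC_eq, qf_add, qf_outerC, qf_one, hx, one_pow]
  have hintegral : ∫ a, ‖⟪a, x0⟫_ℂ‖ ^ 2 * ‖⟪a, x⟫_ℂ‖ ^ 2 ∂stdCGaussian n = qf C x := by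
    simp_rw [← qf_outerC _ x, ← qf_ofReal_smul]
    rw [integral_qf (M := fun a => ((‖⟪a, x0⟫_ℂ‖ ^ 2 : ℝ) : ℂ) • outerC a) fun j k =>
      integrable_sq_norm_inner_mul_outerC_stdCGaussian x0 j k]
    congr 1
    ext j k
    exact (hC j k).symm
  exact ⟨hintegral.trans hqf, hqf, hC_eq⟩
end
end
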